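/- Let n ≥ 1, ν > 0, T > 0, and let A be a constant with 0 < A < ((1+ν)/(2n))^{1/(1+ν)}. Set b = (1+ν)/A^{1+ν} − 2n, which is positive. Define ψ₅(x,t) = A(b(T−t)+|x|²)^{1/(1+ν)}. Then Δψ₅(x,t) − ψ₅(x,t)^{−ν} − ∂ψ₅/∂t(x,t) ≤ 0 for all (x,t) ∈ ℝⁿ × (0,T); i.e., ψ₅ is a supersolution of u_t = Δu − u^{−ν} on ℝⁿ × (0,T). -/

import Mathlib

/-!
With `α = 1/(1+ν)` and `w = b(T-t) + |x|²`, the radial power `A w^α` has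
`Δ(A w^α) = 2nAα w^{α-1} + 4Aα(α-1) w^{α-2}|x|²`, `∂ₜ(A w^α) = -Abα w^{α-1}` and
`(A w^α)^{-ν} = A^{-ν} w^{α-1}`. The choice of `b` is exactly `Aα(2n + b) = A^{-ν}`, so the
`w^{α-1}` terms cancel and the residual is `4Aα(α-1) w^{α-2}|x|² ≤ 0`, as `α < 1`.
-/

open MeasureTheory Real Set Filter Topology Metric

noncomputable section

/-- Euclidean space `ℝⁿ`. -/
abbrev E (n : ℕ) := EuclideanSpace ℝ (Fin n)

/-- Second partial derivative `∂²f/∂xᵢ∂xⱼ` of `f : ℝⁿ → ℝ`. -/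
def pd2 {n : ℕ} (f : E n → ℝ) (i j : Fin n) (x : E n) : ℝ :=
  fderiv ℝ (fun y => fderiv ℝ f y (EuclideanSpace.single j (1 : ℝ))) x
    (EuclideanSpace.single i (1 : ℝ))

/-- Spatial Laplacian of `f : ℝⁿ → ℝ`. -/
def lap {n : ℕ} (f : E n → ℝ) (x : E n) : ℝ := ∑ i, pd2 f i i x

/-- `u = u(x,t)` is of class `C^{2,1}` on a set `S ⊆ ℝⁿ × ℝ`: `u`, `∂u/∂t` and
all first and second spatial derivatives are continuous on `S`. -/
structure IsC21 {n : ℕ} (S : Set (E n × ℝ)) (u : E n → ℝ → ℝ) : Prop where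
  cont : ContinuousOn (fun p : E n × ℝ => u p.1 p.2) S
  cont_t : ContinuousOn (fun p : E n × ℝ => deriv (u p.1) p.2) S
  cont_x : ∀ i : Fin n, ContinuousOn
    (fun p : E n × ℝ =>
      fderiv ℝ (fun y => u y p.2) p.1 (EuclideanSpace.single i (1 : ℝ))) S
  cont_xx : ∀ i j : Fin n, ContinuousOn
    (fun p : E n × ℝ => pd2 (fun y => u y p.2) i j p.1) S

theorem hasFDerivAt_rpow_const_add_norm_sq {F : Type*} [NormedAddCommGroup F]
    [InnerProductSpace ℝ F] {c : ℝ} (α : ℝ) {y : F} (hy : c + ‖y‖ ^ 2 ≠ 0) :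
    HasFDerivAt (fun z : F => (c + ‖z‖ ^ 2) ^ α)
      ((2 * α * (c + ‖y‖ ^ 2) ^ (α - 1)) • innerSL ℝ y) y := by
  refine (((hasStrictFDerivAt_norm_sq y).hasFDerivAt.const_add c).rpow_const
    (Or.inl hy)).congr_fderiv ?_
  ext v
  simp [two_smul]
  ring

section RadialPower

variable {n : ℕ} {c : ℝ} (hc : 0 < c) (A α : ℝ)
include hc

theorem fderiv_const_mul_rpow_const_add_norm_sq_single (y : E n) (j : Fin n) :
    fderiv ℝ (fun z : E n => A * (c + ‖z‖ ^ 2) ^ α) y (EuclideanSpace.single j 1)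
      = 2 * A * α * ((c + ‖y‖ ^ 2) ^ (α - 1) * y j) := by
  rw [((hasFDerivAt_rpow_const_add_norm_sq α (by positivity)).const_mul A).fderiv]
  simp [smul_smul, EuclideanSpace.inner_single_right]
  ring

theorem pd2_const_mul_rpow_const_add_norm_sq (x : E n) (j : Fin n) :
    pd2 (fun z : E n => A * (c + ‖z‖ ^ 2) ^ α) j j x
      = 2 * A * α * (c + ‖x‖ ^ 2) ^ (α - 1)
        + 4 * A * α * (α - 1) * (c + ‖x‖ ^ 2) ^ (α - 2) * x j ^ 2 := by
  unfold pd2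
  simp_rw [fderiv_const_mul_rpow_const_add_norm_sq_single hc]
  have hpow := hasFDerivAt_rpow_const_add_norm_sq (α - 1) (y := x) (by positivity)
  have hproj : HasFDerivAt (fun z : E n => z j) (EuclideanSpace.proj j : E n →L[ℝ] ℝ) x := by
    simpa using (EuclideanSpace.proj (𝕜 := ℝ) j).hasFDerivAt (x := x)
  have hprod : HasFDerivAt (fun y : E n => 2 * A * α * ((c + ‖y‖ ^ 2) ^ (α - 1) * y j)) _ x :=
    (hpow.mul hproj).const_mul (2 * A * α)
  rw [hprod.fderiv]
  simp [smul_smul, EuclideanSpace.inner_single_right, show α - 1 - 1 = α - 2 by ring]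
  ring

theorem lap_const_mul_rpow_const_add_norm_sq (x : E n) :
    lap (fun z : E n => A * (c + ‖z‖ ^ 2) ^ α) x
      = n * (2 * A * α * (c + ‖x‖ ^ 2) ^ (α - 1))
        + 4 * A * α * (α - 1) * (c + ‖x‖ ^ 2) ^ (α - 2) * ‖x‖ ^ 2 := by
  have hnorm : ∑ j, x j ^ 2 = ‖x‖ ^ 2 := by simp [EuclideanSpace.norm_sq_eq]
  simp only [lap, pd2_const_mul_rpow_const_add_norm_sq hc, Finset.sum_add_distrib,
    ← Finset.mul_sum, hnorm, Finset.sum_const, Finset.card_univ, Fintype.card_fin,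
    nsmul_eq_mul]
  ring

end RadialPower

theorem hasDerivAt_const_mul_rpow_linear_sub {A α b T r t : ℝ} (ht : b * (T - t) + r ≠ 0) :
    HasDerivAt (fun s => A * (b * (T - s) + r) ^ α)
      (-(A * b * α * (b * (T - t) + r) ^ (α - 1))) t := by
  refine (((((hasDerivAt_id t).const_sub T).const_mul b).add_const r).rpow_const
    (Or.inl ht)).const_mul A |>.congr_deriv ?_
  simp only [id]
  ring

theorem mul_one_div_mul_div_rpow_eq_rpow_neg {A ν : ℝ} (hA : 0 < A) (hν : 0 < 1 + ν) :
    A * (1 / (1 + ν)) * ((1 + ν) / A ^ (1 + ν)) = A ^ (-ν) := by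
  rw [show -ν = 1 - (1 + ν) by ring, rpow_sub hA, rpow_one]
  field_simp

theorem rpow_one_div_one_add_rpow_neg {w : ℝ} (hw : 0 ≤ w) (ν : ℝ) (hν : 0 < 1 + ν) :
    (w ^ (1 / (1 + ν))) ^ (-ν) = w ^ (1 / (1 + ν) - 1) := by
  rw [← rpow_mul hw]
  congr 1
  field_simp
  ring

theorem lt_div_rpow_of_lt_rpow_one_div {m A p : ℝ} (hm : 0 < m) (hA : 0 < A) (hp : 0 < p)
    (h : A < (p / m) ^ (1 / p)) : m < p / A ^ p := by
  rw [one_div, lt_rpow_inv_iff_of_pos hA.le (by positivity) hp, lt_div_iff₀ hm] at h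
  rwa [lt_div_iff₀' (by positivity)]

theorem psi5_supersolution_general (n : ℕ) (hn : 1 ≤ n) (ν T A b : ℝ)
    (hν : 0 < ν)
    (hA : 0 < A) (hA' : A < ((1 + ν) / (2 * n)) ^ (1 / (1 + ν)))
    (hb : b = (1 + ν) / A ^ (1 + ν) - 2 * n)
    (ψ₅ : E n → ℝ → ℝ)
    (hψ₅ : ∀ (x : E n) (t : ℝ),
      ψ₅ x t = A * (b * (T - t) + ‖x‖ ^ 2) ^ (1 / (1 + ν))) :
    0 < b ∧
    ∀ (x : E n), ∀ t ∈ Ioo (0 : ℝ) T,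
      lap (fun y => ψ₅ y t) x - ψ₅ x t ^ (-ν) - deriv (ψ₅ x) t ≤ 0 := by
  have hν1 : 0 < 1 + ν := by linarith
  have hb_pos : 0 < b := by
    rw [hb, sub_pos]
    exact lt_div_rpow_of_lt_rpow_one_div (mul_pos two_pos (by exact_mod_cast hn)) hA hν1 hA'
  refine ⟨hb_pos, fun x t ht => ?_⟩
  set α := 1 / (1 + ν)
  set w := b * (T - t) + ‖x‖ ^ 2
  have hc : 0 < b * (T - t) := mul_pos hb_pos (sub_pos.mpr ht.2)
  have hw : 0 < w := by positivity
  have hcancel : A * α * (2 * n + b) = A ^ (-ν) := by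
    rw [← mul_one_div_mul_div_rpow_eq_rpow_neg hA hν1, hb]
    ring
  have hresidual :
      lap (fun y => ψ₅ y t) x - ψ₅ x t ^ (-ν) - deriv (ψ₅ x) t
        = 4 * A * α * (α - 1) * w ^ (α - 2) * ‖x‖ ^ 2 := by
    rw [funext (hψ₅ · t), funext (hψ₅ x), lap_const_mul_rpow_const_add_norm_sq hc,
      (hasDerivAt_const_mul_rpow_linear_sub hw.ne').deriv, mul_rpow hA.le (by positivity),
      rpow_one_div_one_add_rpow_neg hw.le ν hν1, ← hcancel]
    ring
  have hα_lt : α < 1 := by rw [div_lt_one hν1]; linarith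
  rw [hresidual]
  refine mul_nonpos_of_nonpos_of_nonneg (mul_nonpos_of_nonpos_of_nonneg ?_ ?_) ?_
  · exact mul_nonpos_of_nonneg_of_nonpos (by positivity) (by linarith)
  · positivity
  · positivity

/-- `ψ₅(x,t) = A(b(T-t)+|x|²)^{1/(1+ν)}` is a supersolution of
`u_t = Δu - u^{-ν}` on `ℝⁿ × (0,T)`. -/
theorem psi5_supersolution (n : ℕ) (hn : 1 ≤ n) (ν T A b : ℝ)
    (hν : 0 < ν) (hT : 0 < T)
    (hA : 0 < A) (hA' : A < ((1 + ν) / (2 * n)) ^ (1 / (1 + ν)))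
    (hb : b = (1 + ν) / A ^ (1 + ν) - 2 * n)
    (ψ₅ : E n → ℝ → ℝ)
    (hψ₅ : ∀ (x : E n) (t : ℝ),
      ψ₅ x t = A * (b * (T - t) + ‖x‖ ^ 2) ^ (1 / (1 + ν))) :
    0 < b ∧
    ∀ (x : E n), ∀ t ∈ Ioo (0 : ℝ) T,
      lap (fun y => ψ₅ y t) x - ψ₅ x t ^ (-ν) - deriv (ψ₅ x) t ≤ 0 :=
  psi5_supersolution_general n hn ν T A b hν hA hA' hb ψ₅ hψ₅
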